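/- Let n ≥ 1 and let p₀, p₁, p₂, p₃ be unit vectors in EuclideanSpace ℝ (Fin n) with d(p₀,p₃) = θ. If equality holds in the path estimate, i.e. d(p₀,p₁) + d(p₁,p₂) + d(p₂,p₃) = 2π + θ, then p₀, p₁, p₂, p₃ all lie in a single linear subspace of dimension ≤ 2 of EuclideanSpace ℝ (Fin n) (i.e. they lie on a common great circle of S^{n-1}). -/
import Mathlib

open Real RealInnerProductSpace

/-- Spherical geodesic distance between points of the unit sphere `S^{n-1}`,
given as the angle `arccos ⟪p, q⟫` between unit vectors. -/
noncomputable def sphDist {n : ℕ} (p q : EuclideanSpace ℝ (Fin n)) : ℝ :=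
  Real.arccos ⟪p, q⟫

section Aux

variable {E : Type*} [NormedAddCommGroup E] [InnerProductSpace ℝ E]

private lemma my_arccos_le_arccos {x y : ℝ} (h : x ≤ y) : Real.arccos y ≤ Real.arccos x := by
  rw [Real.arccos_eq_pi_div_two_sub_arcsin, Real.arccos_eq_pi_div_two_sub_arcsin]
  exact sub_le_sub_left (Real.monotone_arcsin h) _

private lemma inner_mem_Icc {x y : E} (hx : ‖x‖ = 1) (hy : ‖y‖ = 1) :
    ⟪x, y⟫ ∈ Set.Icc (-1 : ℝ) 1 := by
  have := abs_real_inner_le_norm x y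
  rw [hx, hy, mul_one] at this
  exact abs_le.mp this

private lemma span_pair_finrank_le (a b : E) :
    Module.finrank ℝ (Submodule.span ℝ ({a, b} : Set E)) ≤ 2 := by
  classical
  have h := finrank_span_finset_le_card (R := ℝ) ({a, b} : Finset E)
  have hc : ({a, b} : Finset E).card ≤ 2 :=
    (Finset.card_insert_le _ _).trans (by simp)
  have hco : (({a, b} : Finset E) : Set E) = ({a, b} : Set E) := by simp
  rw [Set.finrank, hco] at h
  exact h.trans hc

private lemma orth_inner {x y z : E} (hy : ‖y‖ = 1) :
    ⟪x - ⟪x, y⟫ • y, z - ⟪y, z⟫ • y⟫ = ⟪x, z⟫ - ⟪x, y⟫ * ⟪y, z⟫ := by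
  have hyy : ⟪y, y⟫ = (1 : ℝ) := by
    rw [real_inner_self_eq_norm_sq, hy]; norm_num
  have hc : ⟪y, x⟫ = ⟪x, y⟫ := real_inner_comm x y
  simp only [inner_sub_left, inner_sub_right, real_inner_smul_left, real_inner_smul_right,
    hyy, hc]
  ring

private lemma orth_norm {x y : E} (hx : ‖x‖ = 1) (hy : ‖y‖ = 1) :
    ‖x - ⟪x, y⟫ • y‖ = Real.sqrt (1 - ⟪x, y⟫ ^ 2) := by
  have h : ⟪x - ⟪x, y⟫ • y, x - ⟪x, y⟫ • y⟫ = 1 - ⟪x, y⟫ ^ 2 := by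
    have hyy : ⟪y, y⟫ = (1 : ℝ) := by
      rw [real_inner_self_eq_norm_sq, hy]; norm_num
    have hxx : ⟪x, x⟫ = (1 : ℝ) := by
      rw [real_inner_self_eq_norm_sq, hx]; norm_num
    have hc : ⟪y, x⟫ = ⟪x, y⟫ := real_inner_comm x y
    simp only [inner_sub_left, inner_sub_right, real_inner_smul_left, real_inner_smul_right,
      hyy, hxx, hc]
    ring
  have hn : ‖x - ⟪x, y⟫ • y‖ ^ 2 = 1 - ⟪x, y⟫ ^ 2 := by
    rw [← real_inner_self_eq_norm_sq, h]
  rw [← hn, Real.sqrt_sq (norm_nonneg _)]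

private lemma orth_norm' {y z : E} (hy : ‖y‖ = 1) (hz : ‖z‖ = 1) :
    ‖z - ⟪y, z⟫ • y‖ = Real.sqrt (1 - ⟪y, z⟫ ^ 2) := by
  rw [show (⟪y, z⟫ : ℝ) = ⟪z, y⟫ from real_inner_comm z y]
  exact orth_norm hz hy

/-- Spherical triangle inequality for unit vectors. -/
private lemma arccos_inner_triangle {x y z : E} (hx : ‖x‖ = 1) (hy : ‖y‖ = 1) (hz : ‖z‖ = 1) :
    Real.arccos ⟪x, z⟫ ≤ Real.arccos ⟪x, y⟫ + Real.arccos ⟪y, z⟫ := by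
  set a := Real.arccos ⟪x, y⟫ with ha
  set b := Real.arccos ⟪y, z⟫ with hb
  rcases le_or_gt π (a + b) with hab | hab
  · exact (Real.arccos_le_pi _).trans hab
  · have hxy := inner_mem_Icc hx hy
    have hyz := inner_mem_Icc hy hz
    have hcos : Real.cos (a + b) = ⟪x, y⟫ * ⟪y, z⟫ -
        Real.sqrt (1 - ⟪x, y⟫ ^ 2) * Real.sqrt (1 - ⟪y, z⟫ ^ 2) := by
      rw [Real.cos_add, ha, hb, Real.cos_arccos hxy.1 hxy.2, Real.cos_arccos hyz.1 hyz.2,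
        Real.sin_arccos, Real.sin_arccos]
    have hCS : -(‖x - ⟪x, y⟫ • y‖ * ‖z - ⟪y, z⟫ • y‖) ≤ ⟪x, z⟫ - ⟪x, y⟫ * ⟪y, z⟫ := by
      rw [← orth_inner hy]
      have h1 := abs_real_inner_le_norm (x - ⟪x, y⟫ • y) (z - ⟪y, z⟫ • y)
      linarith [neg_abs_le (⟪x - ⟪x, y⟫ • y, z - ⟪y, z⟫ • y⟫ : ℝ)]
    rw [orth_norm hx hy, orth_norm' hy hz] at hCS
    have hge : Real.cos (a + b) ≤ ⟪x, z⟫ := by rw [hcos]; linarith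
    have h0 : 0 ≤ a + b := add_nonneg (Real.arccos_nonneg _) (Real.arccos_nonneg _)
    calc Real.arccos ⟪x, z⟫ ≤ Real.arccos (Real.cos (a + b)) := my_arccos_le_arccos hge
      _ = a + b := Real.arccos_cos h0 hab.le

/-- Equality case of the spherical triangle inequality: the three points are coplanar. -/
private lemma arccos_inner_triangle_eq {x y z : E} (hx : ‖x‖ = 1) (hy : ‖y‖ = 1) (hz : ‖z‖ = 1)
    (h : Real.arccos ⟪x, z⟫ = Real.arccos ⟪x, y⟫ + Real.arccos ⟪y, z⟫) :
    ∃ S : Submodule ℝ E, Module.finrank ℝ S ≤ 2 ∧ x ∈ S ∧ y ∈ S ∧ z ∈ S := by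
  have hxy := inner_mem_Icc hx hy
  have hyz := inner_mem_Icc hy hz
  have hxz := inner_mem_Icc hx hz
  set u := x - ⟪x, y⟫ • y with hu
  set v := z - ⟪y, z⟫ • y with hv
  have hval : ⟪x, z⟫ = Real.cos (Real.arccos ⟪x, y⟫ + Real.arccos ⟪y, z⟫) := by
    rw [← h, Real.cos_arccos hxz.1 hxz.2]
  rw [Real.cos_add, Real.cos_arccos hxy.1 hxy.2, Real.cos_arccos hyz.1 hyz.2,
    Real.sin_arccos, Real.sin_arccos] at hval
  have huv : ⟪u, v⟫ = -(‖u‖ * ‖v‖) := by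
    rw [hu, hv, orth_inner hy, orth_norm hx hy, orth_norm' hy hz]
    linarith
  rcases eq_or_ne u 0 with hu0 | hu0
  · refine ⟨Submodule.span ℝ {y, z}, span_pair_finrank_le y z, ?_, ?_, ?_⟩
    · have hxe : x = ⟪x, y⟫ • y := by rwa [hu, sub_eq_zero] at hu0
      rw [hxe]
      exact Submodule.smul_mem _ _ (Submodule.subset_span (by simp))
    · exact Submodule.subset_span (by simp)
    · exact Submodule.subset_span (by simp)
  rcases eq_or_ne v 0 with hv0 | hv0
  · refine ⟨Submodule.span ℝ {x, y}, span_pair_finrank_le x y, ?_, ?_, ?_⟩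
    · exact Submodule.subset_span (by simp)
    · exact Submodule.subset_span (by simp)
    · have hze : z = ⟪y, z⟫ • y := by rwa [hv, sub_eq_zero] at hv0
      rw [hze]
      exact Submodule.smul_mem _ _ (Submodule.subset_span (by simp))
  · -- both nonzero: v is a negative multiple of u
    have hun : (‖u‖ : ℝ) ≠ 0 := norm_ne_zero_iff.mpr hu0
    have hpar : ⟪u, -v⟫ = ‖u‖ * ‖-v‖ := by
      rw [inner_neg_right, norm_neg, huv, neg_neg]
    have hsm : ‖-v‖ • u = ‖u‖ • (-v) := inner_eq_norm_mul_iff_real.mp hpar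
    rw [norm_neg] at hsm
    have hvu : v = -((‖u‖⁻¹ * ‖v‖) • u) := by
      have h2 : (‖u‖⁻¹ * ‖v‖) • u = -v := by
        rw [mul_smul, hsm, smul_smul, inv_mul_cancel₀ hun, one_smul]
      rw [h2, neg_neg]
    refine ⟨Submodule.span ℝ {y, u}, span_pair_finrank_le y u, ?_, ?_, ?_⟩
    · exact Submodule.mem_span_pair.mpr ⟨⟪x, y⟫, 1, by rw [one_smul, hu]; abel⟩
    · exact Submodule.mem_span_pair.mpr ⟨1, 0, by simp⟩
    · refine Submodule.mem_span_pair.mpr ⟨⟪y, z⟫, -(‖u‖⁻¹ * ‖v‖), ?_⟩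
      rw [neg_smul, ← hvu, hv]
      abel

end Aux

/-- If equality holds in the three-arc path estimate, then the four points lie on a
common great circle, i.e. in a linear subspace of dimension at most 2. -/
theorem spherical_three_arc_path_eq_great_circle (n : ℕ) (hn : 1 ≤ n)
    (p₀ p₁ p₂ p₃ : EuclideanSpace ℝ (Fin n))
    (h₀ : ‖p₀‖ = 1) (h₁ : ‖p₁‖ = 1) (h₂ : ‖p₂‖ = 1) (h₃ : ‖p₃‖ = 1)
    (θ : ℝ) (hθ : sphDist p₀ p₃ = θ)
    (heq : sphDist p₀ p₁ + sphDist p₁ p₂ + sphDist p₂ p₃ = 2 * π + θ) :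
    ∃ S : Submodule ℝ (EuclideanSpace ℝ (Fin n)),
      Module.finrank ℝ S ≤ 2 ∧ p₀ ∈ S ∧ p₁ ∈ S ∧ p₂ ∈ S ∧ p₃ ∈ S := by
  subst hθ
  have h₂' : ‖(-p₂ : EuclideanSpace ℝ (Fin n))‖ = 1 := by rwa [norm_neg]
  simp only [sphDist] at heq
  set A := Real.arccos ⟪p₀, p₁⟫ with hA
  set B := Real.arccos ⟪p₁, p₂⟫ with hB
  set C := Real.arccos ⟪p₂, p₃⟫ with hC
  set Eang := Real.arccos ⟪p₀, p₂⟫ with hE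
  set Th := Real.arccos ⟪p₀, p₃⟫ with hTh
  have hc20 : (⟪p₂, p₀⟫ : ℝ) = ⟪p₀, p₂⟫ := real_inner_comm p₀ p₂
  have hc21 : (⟪p₂, p₁⟫ : ℝ) = ⟪p₁, p₂⟫ := real_inner_comm p₁ p₂
  have T1 : C ≤ Eang + Th := by
    have := arccos_inner_triangle h₂ h₀ h₃
    rwa [hc20] at this
  have T2 : A ≤ (π - Eang) + (π - B) := by
    have := arccos_inner_triangle h₀ h₂' h₁
    rwa [inner_neg_right, inner_neg_left, hc21, Real.arccos_neg, Real.arccos_neg] at this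
  have E1 : A = (π - Eang) + (π - B) := by linarith
  have E2 : C = Eang + Th := by linarith
  obtain ⟨S₁, hS₁rk, hS₁0, hS₁2', hS₁1⟩ := arccos_inner_triangle_eq h₀ h₂' h₁ (by
    rw [inner_neg_right, inner_neg_left, hc21, Real.arccos_neg, Real.arccos_neg]
    exact E1)
  have hS₁2 : p₂ ∈ S₁ := by
    have := S₁.neg_mem hS₁2'
    rwa [neg_neg] at this
  obtain ⟨S₂, hS₂rk, hS₂2, hS₂0, hS₂3⟩ := arccos_inner_triangle_eq h₂ h₀ h₃ (by
    rw [hc20]; exact E2)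
  have hcle := inner_mem_Icc h₀ h₂
  rcases lt_or_ge |(⟪p₀, p₂⟫ : ℝ)| 1 with hlt | hge
  · -- p₀, p₂ linearly independent
    have hsq : (⟪p₀, p₂⟫ : ℝ) ^ 2 < 1 := by
      have := abs_nonneg (⟪p₀, p₂⟫ : ℝ)
      nlinarith [sq_abs (⟪p₀, p₂⟫ : ℝ)]
    have hind : LinearIndependent ℝ ![p₀, p₂] := by
      rw [LinearIndependent.pair_iff]
      intro s t hst
      have e0 : (⟪p₀, s • p₀ + t • p₂⟫ : ℝ) = 0 := by rw [hst, inner_zero_right]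
      have e2 : (⟪p₂, s • p₀ + t • p₂⟫ : ℝ) = 0 := by rw [hst, inner_zero_right]
      have hp00 : (⟪p₀, p₀⟫ : ℝ) = 1 := by
        rw [real_inner_self_eq_norm_sq, h₀]; norm_num
      have hp22 : (⟪p₂, p₂⟫ : ℝ) = 1 := by
        rw [real_inner_self_eq_norm_sq, h₂]; norm_num
      rw [inner_add_right, real_inner_smul_right, real_inner_smul_right, hp00] at e0
      rw [inner_add_right, real_inner_smul_right, real_inner_smul_right, hp22, hc20] at e2
      have h3 : t * (1 - (⟪p₀, p₂⟫ : ℝ) ^ 2) = 0 := by linear_combination e2 - (⟪p₀, p₂⟫ : ℝ) * e0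
      have hne : (1 - (⟪p₀, p₂⟫ : ℝ) ^ 2) ≠ 0 := by nlinarith
      have ht : t = 0 := by
        rcases mul_eq_zero.mp h3 with h | h
        · exact h
        · exact absurd h hne
      refine ⟨?_, ht⟩
      rw [ht] at e0
      linarith
    have hrange : Set.range ![p₀, p₂] = ({p₀, p₂} : Set (EuclideanSpace ℝ (Fin n))) := by
      ext w
      simp [Fin.exists_fin_two]
      tauto
    have hrk2 : Module.finrank ℝ (Submodule.span ℝ ({p₀, p₂} : Set (EuclideanSpace ℝ (Fin n)))) = 2 := by
      have := finrank_span_eq_card hind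
      rwa [hrange, Fintype.card_fin] at this
    set T := Submodule.span ℝ ({p₀, p₂} : Set (EuclideanSpace ℝ (Fin n))) with hT
    have hle1 : T ≤ S₁ := Submodule.span_le.mpr (by
      rintro w (rfl | rfl)
      exacts [hS₁0, hS₁2])
    have hle2 : T ≤ S₂ := Submodule.span_le.mpr (by
      rintro w (rfl | rfl)
      exacts [hS₂0, hS₂2])
    have hTe1 : T = S₁ := Submodule.eq_of_le_of_finrank_le hle1 (by rw [hrk2]; exact hS₁rk)
    have hTe2 : T = S₂ := Submodule.eq_of_le_of_finrank_le hle2 (by rw [hrk2]; exact hS₂rk)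
    refine ⟨T, by rw [hrk2], ?_, ?_, ?_, ?_⟩
    · exact Submodule.subset_span (by simp)
    · rw [hTe1]; exact hS₁1
    · exact Submodule.subset_span (by simp)
    · rw [hTe2]; exact hS₂3
  · -- degenerate: p₂ = ± p₀
    have habs : |(⟪p₀, p₂⟫ : ℝ)| = 1 := le_antisymm (abs_le.mpr hcle) hge
    rcases abs_eq (by norm_num : (0:ℝ) ≤ 1) |>.mp habs with hone | hmone
    · -- p₂ = p₀
      have hp2 : p₀ = p₂ := (inner_eq_one_iff_of_norm_eq_one h₀ h₂).mp hone
      have hE0 : Eang = 0 := by rw [hE, hone, Real.arccos_one]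
      have hApi : A = π := by
        have := Real.arccos_le_pi (⟪p₁, p₂⟫ : ℝ)
        rw [← hB] at this
        linarith [Real.arccos_nonneg (⟪p₁, p₂⟫ : ℝ), Real.arccos_le_pi (⟪p₀, p₁⟫ : ℝ)]
      have hinner : (⟪p₀, p₁⟫ : ℝ) = -1 := by
        have h1 := Real.arccos_eq_pi.mp (hA ▸ hApi)
        have h2 := inner_mem_Icc h₀ h₁
        linarith [h2.1]
      have hp1 : p₁ = -p₀ := by
        have h5 : (⟪p₀, -p₁⟫ : ℝ) = 1 := by rw [inner_neg_right, hinner]; norm_num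
        have h6 := (inner_eq_one_iff_of_norm_eq_one h₀ ((norm_neg p₁).trans h₁)).mp h5
        rw [← neg_neg p₁, ← h6]
      refine ⟨Submodule.span ℝ {p₀, p₃}, span_pair_finrank_le _ _, ?_, ?_, ?_, ?_⟩
      · exact Submodule.subset_span (by simp)
      · rw [hp1]
        exact Submodule.neg_mem _ (Submodule.subset_span (by simp))
      · rw [← hp2]
        exact Submodule.subset_span (by simp)
      · exact Submodule.subset_span (by simp)
    · -- p₂ = -p₀
      have hp2 : p₀ = -p₂ := by
        have : (⟪p₀, -p₂⟫ : ℝ) = 1 := by rw [inner_neg_right, hmone]; norm_num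
        exact (inner_eq_one_iff_of_norm_eq_one h₀ h₂').mp this
      have hEpi : Eang = π := by rw [hE, hmone, Real.arccos_neg_one]
      have hCpi : C = π ∧ Th = 0 := by
        constructor <;>
          linarith [Real.arccos_le_pi (⟪p₂, p₃⟫ : ℝ), Real.arccos_nonneg (⟪p₀, p₃⟫ : ℝ),
            hC ▸ le_refl C, hTh ▸ le_refl Th]
      have hinner : (⟪p₂, p₃⟫ : ℝ) = -1 := by
        have h1 := Real.arccos_eq_pi.mp (hC ▸ hCpi.1)
        have h2 := inner_mem_Icc h₂ h₃
        linarith [h2.1]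
      have hp3 : p₃ = -p₂ := by
        have h5 : (⟪p₂, -p₃⟫ : ℝ) = 1 := by rw [inner_neg_right, hinner]; norm_num
        have h6 := (inner_eq_one_iff_of_norm_eq_one h₂ ((norm_neg p₃).trans h₃)).mp h5
        rw [← neg_neg p₃, ← h6]
      refine ⟨Submodule.span ℝ {p₀, p₁}, span_pair_finrank_le _ _, ?_, ?_, ?_, ?_⟩
      · exact Submodule.subset_span (by simp)
      · exact Submodule.subset_span (by simp)
      · have : p₂ = -p₀ := by rw [hp2, neg_neg]
        rw [this]
        exact Submodule.neg_mem _ (Submodule.subset_span (by simp))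
      · rw [hp3, hp2]
        exact Submodule.subset_span (by simp)
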